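/- arXiv:2209.14211 — 2 statements merged into one kernel-verified Lean document; each statement's English description precedes it below -/
import Mathlib

section
/- For a G-graded commutative ring R, the following two conditions are equivalent: (Av) whenever I, J, J' are graded ideals with h(R) ∩ I ⊆ J ∪ J', then I ⊆ J or I ⊆ J'; and (Cm) whenever J, J' are graded ideals not comparable under inclusion, there exist g ∈ G and r, r' ∈ R_g with r ∈ J \ J' and r' ∈ J' \ J. -/
section GradedGelfand

variable {G : Type*} [AddGroup G] [DecidableEq G] {R : Type*} [CommRing R]
variable (𝒜 : G → AddSubgroup R) [GradedRing 𝒜]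

/-- A homogeneous (graded) prime ideal: a proper graded ideal that is prime
with respect to homogeneous elements. -/
def IsGradedPrime (P : Ideal R) : Prop :=
  P.IsHomogeneous 𝒜 ∧ P ≠ ⊤ ∧
    ∀ a b : R, SetLike.IsHomogeneousElem 𝒜 a → SetLike.IsHomogeneousElem 𝒜 b →
      a * b ∈ P → a ∈ P ∨ b ∈ P

/-- A graded maximal ideal: a proper graded ideal maximal among proper graded ideals. -/
def IsGradedMaximal (M : Ideal R) : Prop :=
  M.IsHomogeneous 𝒜 ∧ M ≠ ⊤ ∧
    ∀ J : Ideal R, J.IsHomogeneous 𝒜 → M ≤ J → J ≠ ⊤ → J = M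

/-- The homogeneous prime spectrum of a graded ring. -/
def GSpec := { P : Ideal R // IsGradedPrime 𝒜 P }

/-- The Zariski topology on the homogeneous prime spectrum, generated by the basic
open sets `D_G(r)` for homogeneous `r`; the closed sets are exactly the `V_G(I)`
for graded ideals `I`. -/
instance : TopologicalSpace (GSpec 𝒜) :=
  TopologicalSpace.generateFrom
    { U | ∃ r : R, SetLike.IsHomogeneousElem 𝒜 r ∧ U = { P : GSpec 𝒜 | r ∉ P.1 } }

/-- The set of graded maximal ideals inside the homogeneous prime spectrum. -/
def GMax : Set (GSpec 𝒜) := { P | IsGradedMaximal 𝒜 P.1 }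

/-- A Gelfand graded ring: every homogeneous prime ideal is contained in a unique
graded maximal ideal. -/
def IsGelfandGraded : Prop :=
  ∀ P : Ideal R, IsGradedPrime 𝒜 P →
    ∃! M : Ideal R, IsGradedMaximal 𝒜 M ∧ P ≤ M

/-- A pm⁺ graded ring: for every homogeneous prime `P`, the homogeneous primes
containing `P` form a chain. -/
def IsPMPlusGraded : Prop :=
  ∀ P Q Q' : Ideal R, IsGradedPrime 𝒜 P → IsGradedPrime 𝒜 Q → IsGradedPrime 𝒜 Q' →
    P ≤ Q → P ≤ Q' → Q ≤ Q' ∨ Q' ≤ Q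

end GradedGelfand

section Statements

variable {G : Type*} [AddGroup G] [DecidableEq G] {R : Type*} [CommRing R]
variable (𝒜 : G → AddSubgroup R) [GradedRing 𝒜]

/-!
A homogeneous element `x` of degree `g` in `J ⊔ J'` splits as `a_g + b_g` with `a ∈ J`,
`b ∈ J'`; if no degree carries a pair of elements separating `J` and `J'`, one of the two
components lies in both ideals, so `x ∈ J ∪ J'`. Avoidance applied to `J ⊔ J'` then forces
`J` and `J'` to be comparable. Conversely, if `h(R) ∩ I ⊆ J ∪ J'` but `I` lies in neither,
then `J ∩ I` and `J' ∩ I` are incomparable, and a separating pair `r, r'` of the same degree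
gives a homogeneous `r + r' ∈ I` that lies in neither `J` nor `J'`.
-/

def HomogeneousUnionAvoidance : Prop :=
  ∀ I J J' : Ideal R, I.IsHomogeneous 𝒜 → J.IsHomogeneous 𝒜 → J'.IsHomogeneous 𝒜 →
    (∀ r : R, SetLike.IsHomogeneousElem 𝒜 r → r ∈ I → r ∈ J ∨ r ∈ J') → I ≤ J ∨ I ≤ J'

def HomogeneousIncomparabilityWitnesses : Prop :=
  ∀ J J' : Ideal R, J.IsHomogeneous 𝒜 → J'.IsHomogeneous 𝒜 → ¬ J ≤ J' → ¬ J' ≤ J →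
    ∃ (g : G) (r r' : R), r ∈ 𝒜 g ∧ r' ∈ 𝒜 g ∧ r ∈ J ∧ r ∉ J' ∧ r' ∈ J' ∧ r' ∉ J

variable {𝒜}

theorem Ideal.IsHomogeneous.le_of_forall_homogeneous_mem {I K : Ideal R}
    (hI : I.IsHomogeneous 𝒜) (h : ∀ r : R, SetLike.IsHomogeneousElem 𝒜 r → r ∈ I → r ∈ K) :
    I ≤ K := by
  rw [← hI.toIdeal_homogeneousCore_eq_self]
  exact Ideal.span_le.mpr fun _ ⟨⟨r, hr⟩, hrI, hx⟩ => hx ▸ h r hr hrI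

theorem Ideal.IsHomogeneous.mem_or_mem_of_mem_sup {J J' : Ideal R}
    (hJ : J.IsHomogeneous 𝒜) (hJ' : J'.IsHomogeneous 𝒜)
    (h : ∀ (g : G) (r r' : R), r ∈ 𝒜 g → r' ∈ 𝒜 g → r ∈ J → r ∉ J' → r' ∈ J' → r' ∈ J)
    {g : G} {x : R} (hxg : x ∈ 𝒜 g) (hx : x ∈ J ⊔ J') : x ∈ J ∨ x ∈ J' := by
  obtain ⟨a, ha, b, hb, rfl⟩ := Submodule.mem_sup.mp hx
  have hag : (DirectSum.decompose 𝒜 a g : R) ∈ J := hJ g ha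
  have hbg : (DirectSum.decompose 𝒜 b g : R) ∈ J' := hJ' g hb
  have hsum : (DirectSum.decompose 𝒜 a g : R) + DirectSum.decompose 𝒜 b g = a + b := by
    simpa [DirectSum.decompose_add] using DirectSum.decompose_of_mem_same 𝒜 hxg
  rw [← hsum]
  by_cases hag' : (DirectSum.decompose 𝒜 a g : R) ∈ J'
  · exact Or.inr (J'.add_mem hag' hbg)
  · exact Or.inl (J.add_mem hag (h g _ _ (SetLike.coe_mem _) (SetLike.coe_mem _) hag hag' hbg))

variable (𝒜)

theorem HomogeneousUnionAvoidance.incomparabilityWitnesses (hAv : HomogeneousUnionAvoidance 𝒜) :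
    HomogeneousIncomparabilityWitnesses 𝒜 := by
  intro J J' hJ hJ' hJJ' hJ'J
  by_contra! hsep
  rcases hAv (J ⊔ J') J J' (hJ.sup hJ') hJ hJ'
      (fun _ ⟨_, hxg⟩ hx => hJ.mem_or_mem_of_mem_sup hJ' hsep hxg hx) with h | h
  · exact hJ'J (le_sup_right.trans h)
  · exact hJJ' (le_sup_left.trans h)

theorem HomogeneousIncomparabilityWitnesses.unionAvoidance
    (hCm : HomogeneousIncomparabilityWitnesses 𝒜) : HomogeneousUnionAvoidance 𝒜 := by
  intro I J J' hI hJ hJ' hcover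
  by_contra! ⟨hIJ, hIJ'⟩
  have hJI : ¬ J ⊓ I ≤ J' ⊓ I := fun hle => hIJ' <| hI.le_of_forall_homogeneous_mem
    fun r hr hrI => (hcover r hr hrI).elim (fun hrJ => (hle ⟨hrJ, hrI⟩).1) id
  have hJ'I : ¬ J' ⊓ I ≤ J ⊓ I := fun hle => hIJ <| hI.le_of_forall_homogeneous_mem
    fun r hr hrI => (hcover r hr hrI).elim id (fun hrJ' => (hle ⟨hrJ', hrI⟩).1)
  obtain ⟨g, r, r', hrg, hr'g, ⟨hrJ, hrI⟩, hrJ', ⟨hr'J', hr'I⟩, hr'J⟩ :=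
    hCm _ _ (hJ.inf hI) (hJ'.inf hI) hJI hJ'I
  rcases hcover (r + r') ⟨g, add_mem hrg hr'g⟩ (I.add_mem hrI hr'I) with h | h
  · exact hr'J ⟨(J.add_mem_iff_right hrJ).mp h, hr'I⟩
  · exact hrJ' ⟨(J'.add_mem_iff_left hr'J').mp h, hrI⟩

theorem stmt_18 :
    (∀ I J J' : Ideal R, I.IsHomogeneous 𝒜 → J.IsHomogeneous 𝒜 → J'.IsHomogeneous 𝒜 →
      (∀ r : R, SetLike.IsHomogeneousElem 𝒜 r → r ∈ I → r ∈ J ∨ r ∈ J') → I ≤ J ∨ I ≤ J') ↔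
    (∀ J J' : Ideal R, J.IsHomogeneous 𝒜 → J'.IsHomogeneous 𝒜 → ¬ J ≤ J' → ¬ J' ≤ J →
      ∃ (g : G) (r r' : R), r ∈ 𝒜 g ∧ r' ∈ 𝒜 g ∧ r ∈ J ∧ r ∉ J' ∧ r' ∈ J' ∧ r' ∉ J) :=
  ⟨HomogeneousUnionAvoidance.incomparabilityWitnesses 𝒜,
    HomogeneousIncomparabilityWitnesses.unionAvoidance 𝒜⟩
end Statements
end

section
/- Let G be a torsion group and R a G-graded commutative ring. Then the following are equivalent: (1) R is a pm⁺ graded ring; (2) for every multiplicatively closed S ⊆ h(R), the localization R_S is a Gelfand graded ring; (3) for every non-nilpotent homogeneous t ∈ h(R), R_t is a Gelfand graded ring; (4) for every non-nilpotent homogeneous t ∈ h(R), D_G(t) is a normal topological space. -/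
/-!
Over a torsion group, a homogeneous element separating two graded primes can be raised to the
order of its degree, so incomparable graded primes `Q, Q'` contain elements `a ∈ Q \ Q'`,
`b ∈ Q' \ Q` of degree `0`, and `t = a + b` lies outside `Q ∪ Q'`. If `Q, Q'` lie above a
common graded prime `P`, this `t` defeats both the Gelfand property of `R_t` (the graded maximal
ideal above `P R_t` would contain `Q R_t` and `Q' R_t`, hence the unit `t`) and the normality of
`D_G(t)` (every open set containing `Q` or `Q'` contains `P`, so `V(Q)` and `V(Q')` cannot be
separated).

Conversely, graded primes of `R_S` are determined by their contractions to `R`, so pm⁺ passes to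
`R_S`. For normality, disjoint closed sets `V(I)`, `V(J)` of `D_G(t)` are separated by
`D(u)`, `D(v)` for homogeneous `u ≡ tᵐ (mod I)`, `v ≡ tⁿ (mod J)` with `u v = 0`. Such a pair
exists: otherwise a graded prime avoiding all products `u v` extends to graded primes above `I`
and above `J` avoiding `t`, and by pm⁺ the larger of the two lies in `V(I) ∩ V(J) ∩ D(t)`.
-/

theorem NormalSpace.exists_specializes_of_specializes {X : Type*} [TopologicalSpace X]
    [NormalSpace X] {x y z : X} (hy : x ⤳ y) (hz : x ⤳ z) : ∃ w, y ⤳ w ∧ z ⤳ w := by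
  by_contra! h
  have hdisj : Disjoint (closure {y}) (closure {z}) :=
    Set.disjoint_left.mpr fun w hwy hwz =>
      h w (specializes_iff_mem_closure.mpr hwy) (specializes_iff_mem_closure.mpr hwz)
  obtain ⟨U, V, hU, hV, hyU, hzV, hUV⟩ := normal_separation isClosed_closure isClosed_closure hdisj
  exact Set.disjoint_left.mp hUV (hy.mem_open hU (hyU (subset_closure rfl)))
    (hz.mem_open hV (hzV (subset_closure rfl)))

section GradedSpectrum

variable {G : Type*} [AddGroup G] [DecidableEq G] {R : Type*} [CommRing R]
  {𝒜 : G → AddSubgroup R} [GradedRing 𝒜]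

theorem IsGradedPrime.pow_notMem {P : Ideal R} (hP : IsGradedPrime 𝒜 P) {t : R}
    (ht : SetLike.IsHomogeneousElem 𝒜 t) (htP : t ∉ P) (n : ℕ) : t ^ n ∉ P := by
  induction n with
  | zero => simpa [← Ideal.eq_top_iff_one] using hP.2.1
  | succ n ih =>
    rw [pow_succ]
    exact fun h => (hP.2.2 _ _ ((SetLike.homogeneousSubmonoid 𝒜).pow_mem ht n) ht h).elim ih htP

theorem IsGradedPrime.not_isNilpotent {P : Ideal R} (hP : IsGradedPrime 𝒜 P) {t : R}
    (ht : SetLike.IsHomogeneousElem 𝒜 t) (htP : t ∉ P) : ¬ IsNilpotent t :=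
  fun ⟨n, hn⟩ => hP.pow_notMem ht htP n (hn ▸ P.zero_mem)

theorem Ideal.IsHomogeneous.le_of_forall_homogeneous {I J : Ideal R} (hI : I.IsHomogeneous 𝒜)
    (h : ∀ x, SetLike.IsHomogeneousElem 𝒜 x → x ∈ I → x ∈ J) : I ≤ J := by
  classical
  intro x hx
  rw [← DirectSum.sum_support_decompose 𝒜 x]
  exact Submodule.sum_mem _ fun g _ => h _ ⟨g, SetLike.coe_mem _⟩ (hI g hx)

theorem Ideal.IsHomogeneous.exists_add_eq_of_mem_sup {I J : Ideal R} (hI : I.IsHomogeneous 𝒜)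
    (hJ : J.IsHomogeneous 𝒜) {x : R} {i : G} (hx : x ∈ 𝒜 i) (hxIJ : x ∈ I ⊔ J) :
    ∃ y ∈ I, ∃ z ∈ J, y ∈ 𝒜 i ∧ y + z = x := by
  obtain ⟨y, hy, z, hz, rfl⟩ := Submodule.mem_sup.mp hxIJ
  refine ⟨_, hI i hy, _, hJ i hz, SetLike.coe_mem _, ?_⟩
  conv_rhs => rw [← DirectSum.decompose_of_mem_same 𝒜 hx]
  rw [DirectSum.decompose_add, DirectSum.add_apply, AddMemClass.coe_add]

theorem exists_le_maximal_homogeneous_disjoint {K : Ideal R} (hK : K.IsHomogeneous 𝒜)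
    {T : Set R} (hKT : Disjoint (K : Set R) T) :
    ∃ M, K ≤ M ∧ Maximal (fun J : Ideal R => J.IsHomogeneous 𝒜 ∧ Disjoint (J : Set R) T) M := by
  refine zorn_le_nonempty₀ _ (fun c hcs hc J hJ => ?_) K ⟨hK, hKT⟩
  refine ⟨sSup c, ⟨Ideal.IsHomogeneous.sSup fun I hI => (hcs hI).1, ?_⟩, fun _ => le_sSup⟩
  refine Set.disjoint_left.mpr fun x hx hxT => ?_
  obtain ⟨I, hI, hxI⟩ := (Submodule.mem_sSup_of_directed ⟨J, hJ⟩ hc.directedOn).mp hx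
  exact Set.disjoint_left.mp (hcs hI).2 hxI hxT

theorem isGradedPrime_of_maximal_disjoint {T : Submonoid R} {M : Ideal R}
    (hM : Maximal (fun J : Ideal R => J.IsHomogeneous 𝒜 ∧ Disjoint (J : Set R) T) M) :
    IsGradedPrime 𝒜 M := by
  obtain ⟨⟨hMh, hMT⟩, hmax⟩ := hM
  refine ⟨hMh, fun h => Set.disjoint_left.mp hMT (h ▸ Submodule.mem_top) T.one_mem, ?_⟩
  intro a b ha hb hab
  by_contra! h
  have meets : ∀ x, SetLike.IsHomogeneousElem 𝒜 x → x ∉ M →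
      ∃ s ∈ T, s ∈ M ⊔ Ideal.span {x} := by
    intro x hx hxM
    by_contra! hdisj
    refine hxM (hmax ⟨hMh.sup (Ideal.homogeneous_span 𝒜 _ (by simpa)), ?_⟩ le_sup_left
      (Ideal.mem_sup_right (Ideal.mem_span_singleton_self x)))
    exact Set.disjoint_left.mpr fun y hy hyT => hdisj y hyT hy
  obtain ⟨s, hsT, hs⟩ := meets a ha h.1
  obtain ⟨s', hs'T, hs'⟩ := meets b hb h.2
  have hprod : (M ⊔ Ideal.span {a}) * (M ⊔ Ideal.span {b}) ≤ M := by
    simp [Ideal.sup_mul, Ideal.mul_sup, Ideal.span_singleton_mul_span_singleton,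
      Ideal.mul_le_right, Ideal.mul_le_left, hab]
  exact Set.disjoint_left.mp hMT (hprod (Ideal.mul_mem_mul hs hs')) (T.mul_mem hsT hs'T)

theorem Ideal.IsHomogeneous.exists_isGradedPrime_le_of_disjoint {K : Ideal R}
    (hK : K.IsHomogeneous 𝒜) (T : Submonoid R) (hKT : Disjoint (K : Set R) T) :
    ∃ P, IsGradedPrime 𝒜 P ∧ K ≤ P ∧ Disjoint (P : Set R) T := by
  obtain ⟨P, hKP, hP⟩ := exists_le_maximal_homogeneous_disjoint hK hKT
  exact ⟨P, isGradedPrime_of_maximal_disjoint hP, hKP, hP.1.2⟩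

theorem Ideal.disjoint_coe_bot_submonoid_iff {J : Ideal R} :
    Disjoint (J : Set R) ((⊥ : Submonoid R) : Set R) ↔ J ≠ ⊤ := by
  rw [Submonoid.coe_bot, Set.disjoint_singleton_right, Ideal.ne_top_iff_one]
  rfl

theorem IsGradedMaximal.isGradedPrime {M : Ideal R} (hM : IsGradedMaximal 𝒜 M) :
    IsGradedPrime 𝒜 M :=
  isGradedPrime_of_maximal_disjoint (T := ⊥)
    ⟨⟨hM.1, Ideal.disjoint_coe_bot_submonoid_iff.mpr hM.2.1⟩, fun J hJ hMJ =>
      (hM.2.2 J hJ.1 hMJ (Ideal.disjoint_coe_bot_submonoid_iff.mp hJ.2)).le⟩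

theorem Ideal.IsHomogeneous.exists_isGradedMaximal_le {I : Ideal R} (hI : I.IsHomogeneous 𝒜)
    (hne : I ≠ ⊤) : ∃ M, IsGradedMaximal 𝒜 M ∧ I ≤ M := by
  obtain ⟨M, hIM, ⟨hMh, hM1⟩, hmax⟩ :=
    exists_le_maximal_homogeneous_disjoint hI (Ideal.disjoint_coe_bot_submonoid_iff.mpr hne)
  refine ⟨M, ⟨hMh, Ideal.disjoint_coe_bot_submonoid_iff.mp hM1, fun J hJ hMJ hJ1 => ?_⟩, hIM⟩
  exact le_antisymm (hmax ⟨hJ, Ideal.disjoint_coe_bot_submonoid_iff.mpr hJ1⟩ hMJ) hMJ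

section GradedRingHom

variable {B : Type*} [CommRing B] {ℬ : G → AddSubgroup B} [GradedRing ℬ]

theorem IsGradedPrime.comap (f : 𝒜 →+*ᵍ ℬ) {Q : Ideal B} (hQ : IsGradedPrime ℬ Q) :
    IsGradedPrime 𝒜 (Q.comap f) := by
  refine ⟨fun g r hr => ?_, Ideal.comap_ne_top f hQ.2.1, fun a b ⟨i, ha⟩ ⟨j, hb⟩ hab => ?_⟩
  · rw [Ideal.mem_comap, GradedRingHom.map_directSumDecompose]
    exact hQ.1 g hr
  · rw [Ideal.mem_comap, map_mul] at hab
    exact hQ.2.2 _ _ ⟨i, Graded.map_mem f ha⟩ ⟨j, Graded.map_mem f hb⟩ hab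

theorem Ideal.IsHomogeneous.map (f : 𝒜 →+*ᵍ ℬ) {I : Ideal R} (hI : I.IsHomogeneous 𝒜) :
    (I.map f).IsHomogeneous ℬ := by
  obtain ⟨S, rfl⟩ := (Ideal.IsHomogeneous.iff_exists 𝒜 I).mp hI
  rw [Ideal.map_span]
  refine Ideal.homogeneous_span ℬ _ ?_
  rintro _ ⟨_, ⟨x, -, rfl⟩, rfl⟩
  obtain ⟨i, hi⟩ := x.2
  exact ⟨i, Graded.map_mem f hi⟩

theorem IsPMPlusGraded.isGelfandGraded (hA : IsPMPlusGraded 𝒜) (f : 𝒜 →+*ᵍ ℬ)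
    (hf : ∀ J : Ideal B, (J.comap f).map f = J) : IsGelfandGraded ℬ := by
  intro P hP
  obtain ⟨M, hM, hPM⟩ := hP.1.exists_isGradedMaximal_le hP.2.1
  refine ⟨M, ⟨hM, hPM⟩, fun M' ⟨hM', hPM'⟩ => ?_⟩
  have reflect : ∀ {J J' : Ideal B}, J.comap f ≤ J'.comap f → J ≤ J' := fun {J J'} h => by
    rw [← hf J, ← hf J']
    exact Ideal.map_mono h
  rcases hA _ _ _ (hP.comap f) (hM'.isGradedPrime.comap f) (hM.isGradedPrime.comap f)
    (Ideal.comap_mono hPM') (Ideal.comap_mono hPM) with h | h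
  · exact (hM'.2.2 M hM.1 (reflect h) hM.2.1).symm
  · exact hM.2.2 M' hM'.1 (reflect h) hM'.2.1

end GradedRingHom

variable (𝒜) in
def IsLocalizationGrading {S : Submonoid R} (ℬ : G → AddSubgroup (Localization S)) : Prop :=
  ∀ (g : G) (x : Localization S), x ∈ ℬ g ↔
    ∃ (r s : R) (h : G) (hs : s ∈ S), r ∈ 𝒜 (g + h) ∧ s ∈ 𝒜 h ∧
      x = Localization.mk r ⟨s, hs⟩

theorem IsPMPlusGraded.isGelfandGraded_localization (hA : IsPMPlusGraded 𝒜) {S : Submonoid R}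
    {ℬ : G → AddSubgroup (Localization S)} [GradedRing ℬ] (hℬ : IsLocalizationGrading 𝒜 ℬ) :
    IsGelfandGraded ℬ := by
  refine hA.isGelfandGraded ⟨algebraMap R _, fun {g r} hr => (hℬ g _).mpr ?_⟩
    (IsLocalization.map_under S _)
  exact ⟨r, 1, 0, S.one_mem, by rwa [add_zero], SetLike.one_mem_graded 𝒜,
    (Localization.mk_one_eq_algebraMap r).symm⟩

theorem exists_mem_zero_mem_notMem_of_not_le (hG : IsAddTorsion G) {Q Q' : Ideal R}
    (hQ : Q.IsHomogeneous 𝒜) (hQ' : IsGradedPrime 𝒜 Q') (h : ¬ Q ≤ Q') :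
    ∃ a ∈ 𝒜 0, a ∈ Q ∧ a ∉ Q' := by
  obtain ⟨x, ⟨d, hx⟩, hxQ, hxQ'⟩ : ∃ x, SetLike.IsHomogeneousElem 𝒜 x ∧ x ∈ Q ∧ x ∉ Q' := by
    by_contra! h'
    exact h (hQ.le_of_forall_homogeneous h')
  refine ⟨x ^ addOrderOf d, ?_, Q.pow_mem_of_mem hxQ _ (hG d).addOrderOf_pos,
    hQ'.pow_notMem ⟨d, hx⟩ hxQ' _⟩
  simpa [addOrderOf_nsmul_eq_zero] using SetLike.pow_mem_graded (addOrderOf d) hx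

theorem exists_mem_zero_add_notMem_of_not_le (hG : IsAddTorsion G) {Q Q' : Ideal R}
    (hQ : IsGradedPrime 𝒜 Q) (hQ' : IsGradedPrime 𝒜 Q') (h₁ : ¬ Q ≤ Q') (h₂ : ¬ Q' ≤ Q) :
    ∃ a ∈ 𝒜 0, ∃ b ∈ 𝒜 0, a ∈ Q ∧ b ∈ Q' ∧ a + b ∉ Q ∧ a + b ∉ Q' := by
  obtain ⟨a, ha, haQ, haQ'⟩ := exists_mem_zero_mem_notMem_of_not_le hG hQ.1 hQ' h₁
  obtain ⟨b, hb, hbQ', hbQ⟩ := exists_mem_zero_mem_notMem_of_not_le hG hQ'.1 hQ h₂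
  exact ⟨a, ha, b, hb, haQ, hbQ', fun h => hbQ ((Q.add_mem_iff_right haQ).mp h),
    fun h => haQ' ((Q'.add_mem_iff_left hbQ').mp h)⟩

theorem GSpec.isOpen_basicOpen {r : R} (hr : SetLike.IsHomogeneousElem 𝒜 r) :
    IsOpen {P : GSpec 𝒜 | r ∉ P.1} :=
  TopologicalSpace.GenerateOpen.basic _ ⟨r, hr, rfl⟩

theorem GSpec.isTopologicalBasis_basicOpen :
    TopologicalSpace.IsTopologicalBasis
      {U | ∃ r : R, SetLike.IsHomogeneousElem 𝒜 r ∧ U = {P : GSpec 𝒜 | r ∉ P.1}} := by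
  refine ⟨?_, ?_, rfl⟩
  · rintro _ ⟨r, hr, rfl⟩ _ ⟨s, hs, rfl⟩ P ⟨hrP, hsP⟩
    refine ⟨_, ⟨r * s, hr.mul hs, rfl⟩, fun h => (P.2.2.2 r s hr hs h).elim hrP hsP,
      fun Q hQ => ⟨fun h => hQ (Ideal.mul_mem_right s _ h), fun h => hQ (Ideal.mul_mem_left _ r h)⟩⟩
  · refine Set.eq_univ_of_forall fun P => ⟨_, ⟨1, SetLike.isHomogeneousElem_one 𝒜, rfl⟩, ?_⟩
    exact fun h => P.2.2.1 ((Ideal.eq_top_iff_one _).mpr h)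

theorem GSpec.exists_eq_zeroLocus_of_isClosed {Z : Set (GSpec 𝒜)} (hZ : IsClosed Z) :
    ∃ I : Ideal R, I.IsHomogeneous 𝒜 ∧ Z = {P | I ≤ P.1} := by
  refine ⟨Ideal.span {r | SetLike.IsHomogeneousElem 𝒜 r ∧ ∀ P ∈ Z, r ∈ P.1},
    Ideal.homogeneous_span 𝒜 _ fun r hr => hr.1, ?_⟩
  ext P
  simp only [Ideal.span_le]
  refine ⟨fun hP r hr => hr.2 P hP, fun h => ?_⟩
  by_contra hPZ
  obtain ⟨_, ⟨r, hr, rfl⟩, hPr, hrZ⟩ :=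
    isTopologicalBasis_basicOpen.exists_subset_of_mem_open hPZ hZ.isOpen_compl
  exact hPr (h ⟨hr, fun Q hQ => by_contra fun hrQ => hrZ hrQ hQ⟩)

theorem GSpec.specializes_iff_le {P Q : GSpec 𝒜} : P ⤳ Q ↔ P.1 ≤ Q.1 := by
  refine ⟨fun h => P.2.1.le_of_forall_homogeneous fun r hr hrP => by_contra fun hrQ =>
    h.mem_open (isOpen_basicOpen hr) hrQ hrP, fun h => specializes_iff_forall_open.mpr ?_⟩
  intro U hU hQU
  obtain ⟨_, ⟨r, hr, rfl⟩, hQr, hrU⟩ :=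
    isTopologicalBasis_basicOpen.exists_subset_of_mem_open hQU hU
  exact hrU fun hrP => hQr (h hrP)

variable (𝒜) in
/-- The graded analogue of the multiplicative set `1 + I` of `R_t`. -/
def homogeneousCongrPow (t : R) (I : Ideal R) : Submonoid R where
  carrier := {u | SetLike.IsHomogeneousElem 𝒜 u ∧ ∃ n : ℕ, u - t ^ n ∈ I}
  mul_mem' := by
    rintro u v ⟨hu, m, hum⟩ ⟨hv, n, hvn⟩
    refine ⟨hu.mul hv, m + n, ?_⟩
    rw [show u * v - t ^ (m + n) = (u - t ^ m) * v + t ^ m * (v - t ^ n) by ring]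
    exact add_mem (I.mul_mem_right _ hum) (I.mul_mem_left _ hvn)
  one_mem' := ⟨SetLike.isHomogeneousElem_one 𝒜, 0, by simp⟩

theorem IsGradedPrime.notMem_of_mem_homogeneousCongrPow {P I : Ideal R}
    (hP : IsGradedPrime 𝒜 P) {t : R} (ht : SetLike.IsHomogeneousElem 𝒜 t) (htP : t ∉ P)
    (hIP : I ≤ P) {u : R} (hu : u ∈ homogeneousCongrPow 𝒜 t I) : u ∉ P := by
  obtain ⟨-, n, hn⟩ := hu
  exact fun huP => hP.pow_notMem ht htP n (by simpa using P.sub_mem huP (hIP hn))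

theorem disjoint_sup_powers_of_disjoint {P I : Ideal R} (hP : P.IsHomogeneous 𝒜)
    (hI : I.IsHomogeneous 𝒜) {t : R} (ht : SetLike.IsHomogeneousElem 𝒜 t)
    (h : Disjoint (P : Set R) (homogeneousCongrPow 𝒜 t I)) :
    Disjoint ((P ⊔ I : Ideal R) : Set R) (Submonoid.powers t) := by
  obtain ⟨d, hd⟩ := ht
  refine Set.disjoint_left.mpr ?_
  rintro _ hq ⟨n, rfl⟩
  obtain ⟨p, hp, c, hc, hpd, hpc⟩ :=
    hP.exists_add_eq_of_mem_sup hI (SetLike.pow_mem_graded n hd) hq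
  refine Set.disjoint_left.mp h hp ⟨⟨_, hpd⟩, n, ?_⟩
  rw [← hpc, sub_add_cancel_left]
  exact I.neg_mem hc

/-- The graded form of the identity `(1 + r a) (1 + s b) = 0` that separates `V(a)` from `V(b)`
when `a + b = 1` in a pm⁺ ring. -/
theorem IsPMPlusGraded.exists_mul_eq_zero (hA : IsPMPlusGraded 𝒜) {t : R}
    (ht : SetLike.IsHomogeneousElem 𝒜 t) {I J : Ideal R} (hI : I.IsHomogeneous 𝒜)
    (hJ : J.IsHomogeneous 𝒜) (hIJ : ∀ P, IsGradedPrime 𝒜 P → t ∉ P → I ≤ P → ¬ J ≤ P) :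
    ∃ u ∈ homogeneousCongrPow 𝒜 t I, ∃ v ∈ homogeneousCongrPow 𝒜 t J, u * v = 0 := by
  by_contra! h
  have h0 : Disjoint ((⊥ : Ideal R) : Set R)
      (homogeneousCongrPow 𝒜 t I ⊔ homogeneousCongrPow 𝒜 t J : Submonoid R) := by
    refine Set.disjoint_left.mpr fun x hx hxT => ?_
    obtain ⟨u, hu, v, hv, huv⟩ := Submonoid.mem_sup.mp hxT
    exact h u hu v hv (huv.trans ((Submodule.mem_bot R).mp hx))
  obtain ⟨P, hP, -, hPT⟩ := (Ideal.IsHomogeneous.bot 𝒜).exists_isGradedPrime_le_of_disjoint _ h0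
  have extend : ∀ {K : Ideal R}, K.IsHomogeneous 𝒜 →
      homogeneousCongrPow 𝒜 t K ≤ homogeneousCongrPow 𝒜 t I ⊔ homogeneousCongrPow 𝒜 t J →
      ∃ M, IsGradedPrime 𝒜 M ∧ K ≤ M ∧ P ≤ M ∧ t ∉ M := by
    intro K hK hKle
    obtain ⟨M, hM, hle, hMt⟩ := (hP.1.sup hK).exists_isGradedPrime_le_of_disjoint _
      (disjoint_sup_powers_of_disjoint hP.1 hK ht (hPT.mono_right hKle))
    exact ⟨M, hM, le_sup_right.trans hle, le_sup_left.trans hle,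
      fun htM => Set.disjoint_left.mp hMt htM (Submonoid.mem_powers t)⟩
  obtain ⟨M, hM, hIM, hPM, htM⟩ := extend hI le_sup_left
  obtain ⟨M', hM', hJM', hPM', htM'⟩ := extend hJ le_sup_right
  rcases hA P M M' hP hM hM' hPM hPM' with hle | hle
  · exact hIJ M' hM' htM' (hIM.trans hle) hJM'
  · exact hIJ M hM htM hIM (hJM'.trans hle)

theorem IsPMPlusGraded.normalSpace_basicOpen (hA : IsPMPlusGraded 𝒜) {t : R}
    (ht : SetLike.IsHomogeneousElem 𝒜 t) : NormalSpace {P : GSpec 𝒜 // t ∉ P.1} := by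
  refine ⟨fun s₁ s₂ hs₁ hs₂ hdisj => ?_⟩
  obtain ⟨Z₁, hZ₁, rfl⟩ := isClosed_induced_iff.mp hs₁
  obtain ⟨Z₂, hZ₂, rfl⟩ := isClosed_induced_iff.mp hs₂
  obtain ⟨I, hI, rfl⟩ := GSpec.exists_eq_zeroLocus_of_isClosed hZ₁
  obtain ⟨J, hJ, rfl⟩ := GSpec.exists_eq_zeroLocus_of_isClosed hZ₂
  obtain ⟨u, hu, v, hv, huv⟩ := hA.exists_mul_eq_zero ht hI hJ fun P hP htP hIP hJP =>
    (Set.disjoint_left.mp hdisj) (a := ⟨⟨P, hP⟩, htP⟩) hIP hJP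
  refine ⟨Subtype.val ⁻¹' {P | u ∉ P.1}, Subtype.val ⁻¹' {P | v ∉ P.1},
    (GSpec.isOpen_basicOpen hu.1).preimage continuous_subtype_val,
    (GSpec.isOpen_basicOpen hv.1).preimage continuous_subtype_val,
    fun P hP => P.1.2.notMem_of_mem_homogeneousCongrPow ht P.2 hP hu,
    fun P hP => P.1.2.notMem_of_mem_homogeneousCongrPow ht P.2 hP hv,
    Set.disjoint_left.mpr fun P huP hvP => ?_⟩
  exact (P.1.2.2.2 u v hu.1 hv.1 (huv ▸ zero_mem _)).elim huP hvP

theorem isPMPlusGraded_of_normalSpace (hG : IsAddTorsion G)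
    (hN : ∀ t : R, SetLike.IsHomogeneousElem 𝒜 t → ¬ IsNilpotent t →
      NormalSpace {P : GSpec 𝒜 // t ∉ P.1}) : IsPMPlusGraded 𝒜 := by
  intro P Q Q' hP hQ hQ' hPQ hPQ'
  by_contra! h
  obtain ⟨a, ha, b, hb, haQ, hbQ', htQ, htQ'⟩ :=
    exists_mem_zero_add_notMem_of_not_le hG hQ hQ' h.1 h.2
  have ht : SetLike.IsHomogeneousElem 𝒜 (a + b) := ⟨0, add_mem ha hb⟩
  have := hN _ ht (hQ.not_isNilpotent ht htQ)
  let x : {P : GSpec 𝒜 // a + b ∉ P.1} := ⟨⟨P, hP⟩, fun h => htQ (hPQ h)⟩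
  let y : {P : GSpec 𝒜 // a + b ∉ P.1} := ⟨⟨Q, hQ⟩, htQ⟩
  let z : {P : GSpec 𝒜 // a + b ∉ P.1} := ⟨⟨Q', hQ'⟩, htQ'⟩
  have hxy : x ⤳ y := (subtype_specializes_iff _ _).mpr (GSpec.specializes_iff_le.mpr hPQ)
  have hxz : x ⤳ z := (subtype_specializes_iff _ _).mpr (GSpec.specializes_iff_le.mpr hPQ')
  obtain ⟨w, hyw, hzw⟩ := NormalSpace.exists_specializes_of_specializes hxy hxz
  rw [subtype_specializes_iff, GSpec.specializes_iff_le] at hyw hzw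
  exact w.2 (add_mem (hyw haQ) (hzw hbQ'))

section Away

variable {t : R}

theorem mem_zero_of_mem_powers (ht : t ∈ 𝒜 0) {s : R} (hs : s ∈ Submonoid.powers t) :
    s ∈ 𝒜 0 := by
  obtain ⟨n, rfl⟩ := hs
  simpa using SetLike.pow_mem_graded n ht

theorem mul_mem_of_mem_zero {a x : R} {g : G} (ha : a ∈ 𝒜 0) (hx : x ∈ 𝒜 g) : a * x ∈ 𝒜 g := by
  simpa using SetLike.mul_mem_graded ha hx

def awayGrading (ht : t ∈ 𝒜 0) (g : G) : AddSubgroup (Localization.Away t) where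
  carrier := {x | ∃ r ∈ 𝒜 g, ∃ s : Submonoid.powers t, x = Localization.mk r s}
  zero_mem' := ⟨0, zero_mem _, 1, Localization.mk_zero 1 |>.symm⟩
  add_mem' := by
    rintro _ _ ⟨r, hr, s, rfl⟩ ⟨r', hr', s', rfl⟩
    refine ⟨_, add_mem (mul_mem_of_mem_zero (mem_zero_of_mem_powers ht s.2) hr')
      (mul_mem_of_mem_zero (mem_zero_of_mem_powers ht s'.2) hr), s * s',
      Localization.add_mk _ _ _ _⟩
  neg_mem' := by
    rintro _ ⟨r, hr, s, rfl⟩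
    exact ⟨-r, neg_mem hr, s, Localization.neg_mk _ _⟩

theorem isLocalizationGrading_awayGrading (ht : t ∈ 𝒜 0) (hnil : ¬ IsNilpotent t) :
    IsLocalizationGrading 𝒜 (awayGrading ht) := by
  refine fun g x => ⟨?_, ?_⟩
  · rintro ⟨r, hr, ⟨s, hs⟩, rfl⟩
    exact ⟨r, s, 0, hs, by rwa [add_zero], mem_zero_of_mem_powers ht hs, rfl⟩
  · rintro ⟨r, s, h, hs, hr, hsh, rfl⟩
    have hs0 : s ≠ 0 := by
      rintro rfl
      obtain ⟨n, hn⟩ := hs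
      exact hnil ⟨n, hn⟩
    obtain rfl : h = 0 := DirectSum.degree_eq_of_mem_mem 𝒜 hsh (mem_zero_of_mem_powers ht hs) hs0
    exact ⟨r, by rwa [add_zero] at hr, ⟨s, hs⟩, rfl⟩

instance (ht : t ∈ 𝒜 0) : SetLike.GradedMonoid (awayGrading ht) where
  one_mem := ⟨1, SetLike.one_mem_graded 𝒜, 1, Localization.mk_one.symm⟩
  mul_mem := by
    rintro g h _ _ ⟨r, hr, s, rfl⟩ ⟨r', hr', s', rfl⟩
    exact ⟨r * r', SetLike.mul_mem_graded hr hr', s * s', Localization.mk_mul _ _ _ _⟩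

theorem eq_zero_of_sum_homogeneous_eq_zero {s : Finset G} {x : G → R} (hx : ∀ g ∈ s, x g ∈ 𝒜 g)
    (h : ∑ g ∈ s, x g = 0) {g : G} (hg : g ∈ s) : x g = 0 := by
  classical
  calc x g = ∑ i ∈ s, (DirectSum.decompose 𝒜 (x i) g : R) := by
        rw [Finset.sum_eq_single_of_mem g hg fun i hi hne =>
          DirectSum.decompose_of_mem_ne 𝒜 (hx i hi) hne,
          DirectSum.decompose_of_mem_same 𝒜 (hx g hg)]
    _ = 0 := by
      rw [← AddSubmonoidClass.coe_finsetSum, ← DFinsupp.finsetSum_apply, ← DirectSum.decompose_sum,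
        h, DirectSum.decompose_zero]
      rfl

theorem awayGrading_exists_common_denominator (ht : t ∈ 𝒜 0) (s : Finset G)
    (x : G → Localization.Away t) (hx : ∀ g, x g ∈ awayGrading ht g) :
    ∃ c ∈ Submonoid.powers t, ∀ g ∈ s, ∃ r ∈ 𝒜 g, algebraMap R _ c * x g = algebraMap R _ r := by
  classical
  induction s using Finset.induction_on with
  | empty => exact ⟨1, one_mem _, by simp⟩
  | insert g s _ ih =>
    obtain ⟨c, hc, hcx⟩ := ih
    obtain ⟨r, hr, d, hd⟩ := hx g
    refine ⟨d * c, mul_mem d.2 hc, (Finset.forall_mem_insert _ _ _).mpr ⟨?_, fun i hi => ?_⟩⟩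
    · refine ⟨c * r, mul_mem_of_mem_zero (mem_zero_of_mem_powers ht hc) hr, ?_⟩
      rw [hd, Localization.mk_eq_mk'_apply, map_mul, mul_right_comm, IsLocalization.mk'_spec',
        ← map_mul, mul_comm]
    · obtain ⟨r', hr', hcr'⟩ := hcx i hi
      refine ⟨d * r', mul_mem_of_mem_zero (mem_zero_of_mem_powers ht d.2) hr', ?_⟩
      rw [map_mul, map_mul, mul_assoc, hcr']

theorem awayGrading_isInternal (ht : t ∈ 𝒜 0) : DirectSum.IsInternal (awayGrading ht) := by
  classical
  refine ⟨(injective_iff_map_eq_zero _).mpr fun v hv => ?_, fun x => ?_⟩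
  · obtain ⟨c, hc, hcv⟩ :=
      awayGrading_exists_common_denominator ht v.support (fun g => v g) fun g => (v g).2
    choose! r hr hrv using hcv
    have hsum : algebraMap R (Localization.Away t) (∑ g ∈ v.support, r g) = 0 := by
      rw [map_sum, ← Finset.sum_congr rfl hrv, ← Finset.mul_sum, ← DFinsupp.sum,
        ← DirectSum.coeAddMonoidHom_eq_dfinsuppSum, hv, mul_zero]
    obtain ⟨⟨m, hm⟩, hmr⟩ := (IsLocalization.map_eq_zero_iff (Submonoid.powers t) _ _).mp hsum
    rw [Finset.mul_sum] at hmr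
    ext g
    by_cases hg : g ∈ v.support
    · have hmrg : m * r g = 0 := eq_zero_of_sum_homogeneous_eq_zero
        (fun i hi => mul_mem_of_mem_zero (mem_zero_of_mem_powers ht hm) (hr i hi)) hmr hg
      have hunit := IsLocalization.map_units (Localization.Away t)
        (⟨m * c, mul_mem hm hc⟩ : Submonoid.powers t)
      refine hunit.mul_right_eq_zero.mp ?_
      rw [map_mul, mul_assoc, hrv g hg, ← map_mul, hmrg, map_zero]
    · simpa using hg
  · induction x using Localization.induction_on with | H x => ?_
    obtain ⟨r, s⟩ := x
    refine ⟨∑ g ∈ (DirectSum.decompose 𝒜 r).support, DirectSum.of (fun g => awayGrading ht g) g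
      ⟨Localization.mk (DirectSum.decompose 𝒜 r g) s, _, SetLike.coe_mem _, s, rfl⟩, ?_⟩
    rw [map_sum]
    simp only [DirectSum.coeAddMonoidHom_of]
    rw [← Localization.mk_sum, DirectSum.sum_support_decompose]

noncomputable instance (ht : t ∈ 𝒜 0) : GradedRing (awayGrading ht) where
  toGradedMonoid := inferInstance
  toDecomposition := (awayGrading_isInternal ht).chooseDecomposition

theorem IsGradedPrime.mk_mem_map_algebraMap_iff {P : Ideal R} (hP : IsGradedPrime 𝒜 P)
    (ht : SetLike.IsHomogeneousElem 𝒜 t) (htP : t ∉ P) {r : R}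
    (hr : SetLike.IsHomogeneousElem 𝒜 r) (s : Submonoid.powers t) :
    Localization.mk r s ∈ P.map (algebraMap R (Localization.Away t)) ↔ r ∈ P := by
  rw [Localization.mk_eq_mk'_apply, IsLocalization.mk'_mem_map_algebraMap_iff]
  refine ⟨?_, fun h => ⟨1, one_mem _, by rwa [one_mul]⟩⟩
  rintro ⟨_, ⟨n, rfl⟩, h⟩
  exact (hP.2.2 _ _ ((SetLike.homogeneousSubmonoid 𝒜).pow_mem ht n) hr h).resolve_left
    (hP.pow_notMem ht htP n)

theorem IsGradedPrime.map_away {P : Ideal R} (hP : IsGradedPrime 𝒜 P) (ht : t ∈ 𝒜 0)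
    (htP : t ∉ P) :
    IsGradedPrime (awayGrading ht) (P.map (algebraMap R (Localization.Away t))) := by
  let f : 𝒜 →+*ᵍ awayGrading ht :=
    ⟨algebraMap R _, fun {_ r} hr => ⟨r, hr, 1, (Localization.mk_one_eq_algebraMap r).symm⟩⟩
  refine ⟨hP.1.map f, fun h => hP.2.1 ?_, ?_⟩
  · rw [Ideal.eq_top_iff_one, ← hP.mk_mem_map_algebraMap_iff ⟨0, ht⟩ htP
      (SetLike.isHomogeneousElem_one 𝒜) 1, Localization.mk_one, h]
    trivial
  · rintro _ _ ⟨g, r, hr, s, rfl⟩ ⟨h, r', hr', s', rfl⟩ hmul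
    rw [Localization.mk_mul, hP.mk_mem_map_algebraMap_iff ⟨0, ht⟩ htP
      ⟨_, SetLike.mul_mem_graded hr hr'⟩] at hmul
    rw [hP.mk_mem_map_algebraMap_iff ⟨0, ht⟩ htP ⟨g, hr⟩,
      hP.mk_mem_map_algebraMap_iff ⟨0, ht⟩ htP ⟨h, hr'⟩]
    exact hP.2.2 _ _ ⟨g, hr⟩ ⟨h, hr'⟩ hmul

end Away

theorem isPMPlusGraded_of_isGelfandGraded_away (hG : IsAddTorsion G)
    (hC : ∀ t (ht : t ∈ 𝒜 0), ¬ IsNilpotent t → IsGelfandGraded (awayGrading ht)) :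
    IsPMPlusGraded 𝒜 := by
  intro P Q Q' hP hQ hQ' hPQ hPQ'
  by_contra! h
  obtain ⟨a, ha, b, hb, haQ, hbQ', htQ, htQ'⟩ :=
    exists_mem_zero_add_notMem_of_not_le hG hQ hQ' h.1 h.2
  have ht : a + b ∈ 𝒜 0 := add_mem ha hb
  obtain ⟨M, ⟨hM, -⟩, huniq⟩ :=
    hC _ ht (hQ.not_isNilpotent ⟨0, ht⟩ htQ) _ (hP.map_away ht fun h => htQ (hPQ h))
  have le_M : ∀ {Q}, IsGradedPrime 𝒜 Q → P ≤ Q → a + b ∉ Q →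
      Q.map (algebraMap R (Localization.Away (a + b))) ≤ M := by
    intro Q hQ hPQ htQ
    have hQe := hQ.map_away ht htQ
    obtain ⟨M', hM', hQM'⟩ := hQe.1.exists_isGradedMaximal_le hQe.2.1
    exact huniq M' ⟨hM', (Ideal.map_mono hPQ).trans hQM'⟩ ▸ hQM'
  have htM : algebraMap R _ (a + b) ∈ M := by
    rw [map_add]
    exact add_mem (le_M hQ hPQ htQ (Ideal.mem_map_of_mem _ haQ))
      (le_M hQ' hPQ' htQ' (Ideal.mem_map_of_mem _ hbQ'))
  exact hM.2.1 (Ideal.eq_top_of_isUnit_mem _ htM (IsLocalization.Away.algebraMap_isUnit _))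

end GradedSpectrum

section Statements

variable {G : Type*} [AddGroup G] [DecidableEq G] {R : Type*} [CommRing R]
variable (𝒜 : G → AddSubgroup R) [GradedRing 𝒜]

theorem stmt_19 (hG : AddMonoid.IsTorsion G) :
    (IsPMPlusGraded 𝒜 ↔
      ∀ (S : Submonoid R), (∀ s ∈ S, SetLike.IsHomogeneousElem 𝒜 s) →
        ∀ (ℬ : G → AddSubgroup (Localization S)) [GradedRing ℬ],
          (∀ (g : G) (x : Localization S), x ∈ ℬ g ↔
            ∃ (r s : R) (h : G) (hs : s ∈ S), r ∈ 𝒜 (g + h) ∧ s ∈ 𝒜 h ∧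
              x = Localization.mk r ⟨s, hs⟩) →
          IsGelfandGraded ℬ) ∧
    (IsPMPlusGraded 𝒜 ↔
      ∀ t : R, SetLike.IsHomogeneousElem 𝒜 t → ¬ IsNilpotent t →
        ∀ (ℬ : G → AddSubgroup (Localization (Submonoid.powers t))) [GradedRing ℬ],
          (∀ (g : G) (x : Localization (Submonoid.powers t)), x ∈ ℬ g ↔
            ∃ (r s : R) (h : G) (hs : s ∈ Submonoid.powers t), r ∈ 𝒜 (g + h) ∧ s ∈ 𝒜 h ∧
              x = Localization.mk r ⟨s, hs⟩) →
          IsGelfandGraded ℬ) ∧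
    (IsPMPlusGraded 𝒜 ↔
      ∀ t : R, SetLike.IsHomogeneousElem 𝒜 t → ¬ IsNilpotent t →
        NormalSpace { P : GSpec 𝒜 // t ∉ P.1 }) := by
  refine ⟨⟨fun hA _ _ _ _ hℬ => hA.isGelfandGraded_localization hℬ, fun hB => ?_⟩,
    ⟨fun hA _ _ _ _ _ hℬ => hA.isGelfandGraded_localization hℬ, fun hC => ?_⟩,
    fun hA _ ht _ => hA.normalSpace_basicOpen ht, isPMPlusGraded_of_normalSpace hG⟩
  · exact isPMPlusGraded_of_isGelfandGraded_away hG fun t ht hnil =>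
      hB _ (fun s hs => ⟨0, mem_zero_of_mem_powers ht hs⟩) _
        (isLocalizationGrading_awayGrading ht hnil)
  · exact isPMPlusGraded_of_isGelfandGraded_away hG fun t ht hnil =>
      hC t ⟨0, ht⟩ hnil _ (isLocalizationGrading_awayGrading ht hnil)
end Statements
end
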